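/- If C is an abelian category, then the Freyd category B(C) = Mor(C)/X (quotient by split monomorphisms) is equivalent to the category of right-exact chain complexes M → N → P → 0 in C, taken up to chain homotopy equivalence. -/

import Mathlib

open CategoryTheory CategoryTheory.Limits

/-- A morphism in `Mor(C) = Arrow C` factors through an object of the full subcategory of
split monomorphisms. -/
def FactorsThroughSplitMono {C : Type*} [Category C] {A B : Arrow C} (h : A ⟶ B) : Prop :=
  ∃ (P Q : C) (w : P ⟶ Q) (_ : IsSplitMono w) (a : A ⟶ Arrow.mk w) (b : Arrow.mk w ⟶ B),
    a ≫ b = h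

/-- The congruence defining `B(C) = Mor(C)/X`, `X` the split monomorphisms. -/
def bRel (C : Type*) [Category C] [Preadditive C] : HomRel (Arrow C) :=
  fun {A B} f g =>
    ∃ h : A ⟶ B, FactorsThroughSplitMono h ∧
      f.left = g.left + h.left ∧ f.right = g.right + h.right

/-- The Freyd category `B(C) = Mor(C)/X`. -/
def BCat (C : Type*) [Category C] [Preadditive C] :=
  CategoryTheory.Quotient (bRel C)

noncomputable instance (C : Type*) [Category C] [Preadditive C] : Category (BCat C) :=
  inferInstanceAs (Category (CategoryTheory.Quotient (bRel C)))

variable (C : Type*) [Category C] [Abelian C]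

/-- The category of right exact sequences `M → N → P → 0` in `C`:
short complexes `M → N → P` which are exact at `N` and with `N → P` an epimorphism. -/
def RightExactCat :=
  CategoryTheory.ObjectProperty.FullSubcategory (fun S : ShortComplex C => S.Exact ∧ Epi S.g)

instance : Category (RightExactCat C) :=
  inferInstanceAs (Category (CategoryTheory.ObjectProperty.FullSubcategory _))

/-- The chain homotopy relation on morphisms of right exact sequences
`M → N → P → 0` (the complexes being extended by zero on the right). -/
def htpyRel : HomRel (RightExactCat C) :=
  fun {S T} φ ψ =>
    ∃ (α : S.obj.X₂ ⟶ T.obj.X₁) (β : S.obj.X₃ ⟶ T.obj.X₂),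
      φ.hom.τ₁ - ψ.hom.τ₁ = S.obj.f ≫ α ∧
      φ.hom.τ₂ - ψ.hom.τ₂ = α ≫ T.obj.f + S.obj.g ≫ β ∧
      φ.hom.τ₃ - ψ.hom.τ₃ = β ≫ T.obj.g

/-!
Sending `u : M ⟶ N` to `M ⟶ N ⟶ coker u ⟶ 0` is an equivalence from `Mor(C)` to right exact
sequences, with inverse remembering `M ⟶ N`. It identifies the two relations, since both say of
the difference `(f₁, f₂) : (u : M ⟶ N) ⟶ (u' : M' ⟶ N')` of two morphisms that `f₁ = u ≫ α` for
some `α : N ⟶ M'`. For split monomorphisms such an `α` comes from a retraction, and conversely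
`(f₁, f₂)` then factors through `inl : M' ⟶ M' ⊞ N'`. For homotopies `α` is the first component,
and the second one exists because `N ⟶ P` is a cokernel of `u`.
-/

namespace CategoryTheory.Equivalence

variable {A B : Type*} [Category A] [Category B] (e : A ≌ B) {r : HomRel A} {s : HomRel B}

noncomputable def quotient
    (hr : ∀ ⦃X Y : A⦄ (f g : X ⟶ Y), r f g → s (e.functor.map f) (e.functor.map g))
    (hs : ∀ ⦃X Y : B⦄ (f g : X ⟶ Y), s f g → r (e.inverse.map f) (e.inverse.map g)) :
    Quotient r ≌ Quotient s :=
  have hF : ∀ X Y (f g : X ⟶ Y), r f g →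
      (e.functor ⋙ Quotient.functor s).map f = (e.functor ⋙ Quotient.functor s).map g :=
    fun _ _ f g h => Quotient.sound s (hr f g h)
  have hG : ∀ X Y (f g : X ⟶ Y), s f g →
      (e.inverse ⋙ Quotient.functor r).map f = (e.inverse ⋙ Quotient.functor r).map g :=
    fun _ _ f g h => Quotient.sound r (hs f g h)
  let F := Quotient.lift r _ hF
  let G := Quotient.lift s _ hG
  .mk F G
    (Quotient.natIsoLift r <|
      Functor.isoWhiskerRight e.unitIso (Quotient.functor r) ≪≫
        Functor.isoWhiskerLeft e.functor (Quotient.lift.isLift s _ hG).symm ≪≫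
        Functor.isoWhiskerRight (Quotient.lift.isLift r _ hF).symm G)
    (Quotient.natIsoLift s <|
      Functor.isoWhiskerRight (Quotient.lift.isLift s _ hG) F ≪≫
        Functor.isoWhiskerLeft e.inverse (Quotient.lift.isLift r _ hF) ≪≫
        Functor.isoWhiskerRight e.counitIso (Quotient.functor s))

end CategoryTheory.Equivalence

theorem factorsThroughSplitMono_iff {D : Type*} [Category D] [Preadditive D]
    [HasBinaryBiproducts D] {A B : Arrow D} (h : A ⟶ B) :
    FactorsThroughSplitMono h ↔ ∃ α : A.right ⟶ B.left, A.hom ≫ α = h.left := by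
  constructor
  · rintro ⟨P, Q, w, _, a, b, rfl⟩
    refine ⟨a.right ≫ retraction w ≫ b.left, ?_⟩
    simp [← Arrow.w_assoc a]
  · rintro ⟨α, hα⟩
    refine ⟨B.left, B.left ⊞ B.right, biprod.inl, inferInstance,
      Arrow.homMk (u := h.left) (v := biprod.lift α (h.right - α ≫ B.hom)) ?_,
      Arrow.homMk (u := 𝟙 B.left) (v := biprod.desc B.hom (𝟙 B.right)) (by simp), ?_⟩
    · apply biprod.hom_ext
      · simp [← hα]
      · simp [reassoc_of% hα]
    · ext <;> simp

theorem bRel_iff {D : Type*} [Category D] [Preadditive D] [HasBinaryBiproducts D]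
    {A B : Arrow D} (f g : A ⟶ B) :
    bRel D f g ↔ ∃ α : A.right ⟶ B.left, f.left - g.left = A.hom ≫ α := by
  constructor
  · rintro ⟨h, hh, hl, -⟩
    obtain ⟨α, hα⟩ := (factorsThroughSplitMono_iff h).1 hh
    exact ⟨α, by rw [hl, hα]; abel⟩
  · rintro ⟨α, hα⟩
    refine ⟨Arrow.homMk (u := f.left - g.left) (v := f.right - g.right) (by simp),
      (factorsThroughSplitMono_iff _).2 ⟨α, hα.symm⟩, by simp, by simp⟩

section

variable {C}

theorem htpyRel_iff {S T : RightExactCat C} (φ ψ : S ⟶ T) :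
    htpyRel C φ ψ ↔ ∃ α : S.obj.X₂ ⟶ T.obj.X₁, φ.hom.τ₁ - ψ.hom.τ₁ = S.obj.f ≫ α := by
  refine ⟨fun ⟨α, _, h₁, _⟩ => ⟨α, h₁⟩, fun ⟨α, h₁⟩ => ?_⟩
  have : Epi S.obj.g := S.property.2
  have hd : S.obj.f ≫ (φ.hom.τ₂ - ψ.hom.τ₂ - α ≫ T.obj.f) = 0 := by
    simp only [Preadditive.comp_sub, ← φ.hom.comm₁₂, ← ψ.hom.comm₁₂, ← Preadditive.sub_comp,
      h₁, Category.assoc, sub_self]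
  obtain ⟨β, hβ⟩ := S.property.1.desc' _ hd
  refine ⟨α, β, h₁, by rw [hβ]; abel, ?_⟩
  rw [← cancel_epi S.obj.g, reassoc_of% hβ]
  simp [← φ.hom.comm₂₃, ← ψ.hom.comm₂₃]

namespace RightExactCat

-- `RightExactCat C` is `(isRightExact C).FullSubcategory` as a plain `def`, opaque to `simp`.
variable (C) in
abbrev isRightExact : ObjectProperty (ShortComplex C) := fun S => S.Exact ∧ Epi S.g

noncomputable abbrev cokernelSequence : Arrow C ⥤ ShortComplex C where
  obj A := ShortComplex.mk A.hom (cokernel.π A.hom) (cokernel.condition _)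
  map f := { τ₁ := f.left, τ₂ := f.right, τ₃ := cokernel.map _ _ f.left f.right f.w.symm }

noncomputable abbrev ofArrow : Arrow C ⥤ (isRightExact C).FullSubcategory :=
  ObjectProperty.lift _ cokernelSequence fun A =>
    ⟨ShortComplex.exact_of_g_is_cokernel _ (cokernelIsCokernel A.hom),
      inferInstanceAs (Epi (cokernel.π A.hom))⟩

abbrev toArrow : (isRightExact C).FullSubcategory ⥤ Arrow C where
  obj S := Arrow.mk S.obj.f
  map φ := Arrow.homMk φ.hom.τ₁ φ.hom.τ₂ φ.hom.comm₁₂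

noncomputable def cokernelIso (S : (isRightExact C).FullSubcategory) :
    cokernel S.obj.f ≅ S.obj.X₃ :=
  have : Epi S.obj.g := S.property.2
  (cokernelIsCokernel S.obj.f).coconePointUniqueUpToIso S.property.1.gIsCokernel

@[simp]
lemma π_cokernelIso_hom (S : (isRightExact C).FullSubcategory) :
    cokernel.π S.obj.f ≫ (cokernelIso S).hom = S.obj.g :=
  have : Epi S.obj.g := S.property.2
  (cokernelIsCokernel S.obj.f).comp_coconePointUniqueUpToIso_hom _ WalkingParallelPair.one

noncomputable def toArrowCompOfArrowIso :
    toArrow ⋙ ofArrow ≅ 𝟭 (isRightExact C).FullSubcategory :=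
  NatIso.ofComponents
    (fun S => ObjectProperty.isoMk _ (ShortComplex.isoMk (Iso.refl S.obj.X₁) (Iso.refl S.obj.X₂)
      (cokernelIso S) (by simp) (by simp)))
    fun φ => by
      ext : 2 <;> simp
      exact coequalizer.hom_ext (by simp [reassoc_of% π_cokernelIso_hom _, φ.hom.comm₂₃])

noncomputable def arrowEquivalence : Arrow C ≌ RightExactCat C :=
  .mk ofArrow toArrow (Iso.refl _) toArrowCompOfArrowIso

end RightExactCat

end

theorem statement5 :
    Nonempty (BCat C ≌ CategoryTheory.Quotient (htpyRel C)) :=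
  ⟨RightExactCat.arrowEquivalence.quotient
    (fun _ _ f g h => (htpyRel_iff _ _).2 ((bRel_iff f g).1 h))
    (fun _ _ φ ψ h => (bRel_iff _ _).2 ((htpyRel_iff φ ψ).1 h))⟩
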